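/- A polynomial P ∈ C[x_1,...,x_n] is quasi-invariant for the quasi-symmetrizing action of G_{n,m} if and only if there exists a quasi-symmetric polynomial Q in n variables such that P(x_1,...,x_n) = Q(x_1^m,...,x_n^m). -/

import Mathlib

open MvPolynomial Complex

/-- The composition obtained from an exponent vector by deleting its zero parts. -/
def qcomp {n : ℕ} (ν : Fin n →₀ ℕ) : List ℕ :=
  (List.ofFn fun i => ν i).filter (· ≠ 0)

/-- A quasi-symmetric polynomial. -/
def IsQuasiSym {n : ℕ} (P : MvPolynomial (Fin n) ℂ) : Prop :=
  ∀ ν μ : Fin n →₀ ℕ, qcomp ν = qcomp μ → P.coeff ν = P.coeff μ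

/-- Hivert's quasi-symmetrizing action on an exponent vector: the exponents of `ν`,
read in increasing variable order, are transported to the sorted support `σ(supp ν)`. -/
noncomputable def hivertExp {n : ℕ} (σ : Equiv.Perm (Fin n)) (ν : Fin n →₀ ℕ) :
    Fin n →₀ ℕ :=
  Finsupp.equivFunOnFinite.symm fun j =>
    ((ν.support.sort (· ≤ ·)).map ν).getD
      (((ν.support.image σ).sort (· ≤ ·)).idxOf j) 0

open scoped Classical in
/-- The quasi-symmetrizing action of the element `g = (σ, w)` of `G_{n,m}` on a
polynomial: on a monomial `x^ν` it acts by Hivert's action of `σ` on the exponents,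
multiplied by the weight `w(g) = ∏ᵢ ζ^{wᵢ}` (`ζ = e^{2πi/m}`) raised to the power
`c(ν)`, where `c(ν) = 0` if all exponents of `ν` are divisible by `m` and `1`
otherwise. -/
noncomputable def qAct {n : ℕ} (m : ℕ) (σ : Equiv.Perm (Fin n)) (w : Fin n → ZMod m)
    (P : MvPolynomial (Fin n) ℂ) : MvPolynomial (Fin n) ℂ :=
  (AddMonoidAlgebra.coeff P).sum fun ν c =>
    monomial (hivertExp σ ν)
      ((if ∀ i, m ∣ ν i then 1
        else ∏ i, Complex.exp (2 * Real.pi * I / m) ^ (w i).val) * c)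

/-!
The element `(σ, w)` sends `x^ν` to a scalar multiple of `x^{σ·ν}`, where `ν ↦ σ·ν`
(`hivertExp σ`) is a bijection of exponent vectors that preserves the composition `qcomp ν`,
and any two exponent vectors with the same composition are related by some `σ`. Taking `w = 0`
shows that invariance under every `σ` is quasi-symmetry of the coefficients. Taking `σ = 1` and
`w` a single generator, the scalar is a primitive `m`-th root of unity on every monomial having an
exponent not divisible by `m`, so no such monomial occurs. The polynomials all of whose exponents
are divisible by `m` are exactly the `expand m Q`, and `expand m` preserves and reflects
quasi-symmetry because multiplying all parts by `m` is injective on compositions.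
-/

namespace List

variable {α β : Type*} [DecidableEq α]

theorem getD_idxOf_ne_iff {L : List β} {S : List α} {d : β} (hlen : L.length = S.length)
    (hd : d ∉ L) (j : α) : L.getD (S.idxOf j) d ≠ d ↔ j ∈ S := by
  by_cases h : j ∈ S
  · have hlt : S.idxOf j < L.length := hlen ▸ idxOf_lt_length_iff.2 h
    rw [getD_eq_getElem _ _ hlt]
    exact iff_of_true (fun he => hd (he ▸ getElem_mem hlt)) h
  · rw [getD_eq_default _ _ (by rw [idxOf_eq_length h, hlen])]
    exact iff_of_false (not_not.2 rfl) h

theorem map_getD_idxOf {L : List β} {S : List α} (hS : S.Nodup) (hlen : L.length = S.length)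
    (d : β) : S.map (fun j => L.getD (S.idxOf j) d) = L := by
  refine ext_getElem (by simp [hlen]) fun i h₁ h₂ => ?_
  rw [getElem_map, hS.idxOf_getElem, getD_eq_getElem]

end List

theorem Finset.exists_perm_image_eq {α : Type*} [Fintype α] [DecidableEq α] {s t : Finset α}
    (h : s.card = t.card) : ∃ σ : Equiv.Perm α, s.image σ = t := by
  let e := (Finset.equivOfCardEq h).extendSubtype
  refine ⟨e, Finset.eq_of_subset_of_card_le ?_ ?_⟩
  · simpa [Finset.image_subset_iff] using fun x hx => Equiv.extendSubtype_mem _ x hx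
  · rw [Finset.card_image_of_injective _ e.injective, h]

theorem Finsupp.exists_eq_smul_of_forall_dvd {α : Type*} {m : ℕ} {ν : α →₀ ℕ}
    (h : ∀ i, m ∣ ν i) : ∃ τ : α →₀ ℕ, ν = m • τ :=
  ⟨ν.mapRange (· / m) (Nat.zero_div m), by ext i; simp [Nat.mul_div_cancel' (h i)]⟩

theorem MvPolynomial.exists_expand_eq_iff {σ R : Type*} [CommSemiring R] {m : ℕ} (hm : m ≠ 0)
    (P : MvPolynomial σ R) : (∃ Q, expand m Q = P) ↔ ∀ ν ∈ P.support, ∀ i, m ∣ ν i := by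
  refine ⟨?_, fun h => ?_⟩
  · rintro ⟨Q, rfl⟩ ν hν i
    by_contra hi
    exact mem_support_iff.1 hν (coeff_expand_of_not_dvd Q hi)
  · let Q : MvPolynomial σ R := AddMonoidAlgebra.ofCoeff <|
      Finsupp.comapDomain (m • ·) (AddMonoidAlgebra.coeff P) (smul_right_injective _ hm).injOn
    refine ⟨Q, MvPolynomial.ext _ _ fun ν => ?_⟩
    by_cases hd : ∀ i, m ∣ ν i
    · obtain ⟨τ, rfl⟩ := Finsupp.exists_eq_smul_of_forall_dvd hd
      rw [coeff_expand_smul _ hm]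
      rfl
    · obtain ⟨i, hi⟩ := not_forall.1 hd
      rw [coeff_expand_of_not_dvd Q hi, eq_comm, ← notMem_support_iff]
      exact fun hν => hi (h ν hν i)

section Compositions

variable {n : ℕ}

theorem qcomp_eq_map_sort (ν : Fin n →₀ ℕ) :
    qcomp ν = (ν.support.sort (· ≤ ·)).map ν := by
  have hsort : (List.finRange n).filter (fun i => ν i ≠ 0) = ν.support.sort (· ≤ ·) := by
    refine List.Perm.eq_of_pairwise' (r := (· ≤ ·)) ?_ ?_ ?_
    · exact List.Pairwise.filter _ (List.sortedLT_finRange n).sortedLE.pairwise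
    · exact ν.support.pairwise_sort (· ≤ ·)
    · rw [List.perm_ext_iff_of_nodup ((List.nodup_finRange n).filter _) (ν.support.sort_nodup _)]
      simp
  rw [qcomp, List.ofFn_eq_map, List.filter_map, ← hsort]
  rfl

theorem length_qcomp (ν : Fin n →₀ ℕ) : (qcomp ν).length = ν.support.card := by
  rw [qcomp_eq_map_sort, List.length_map, Finset.length_sort]

theorem mem_qcomp {ν : Fin n →₀ ℕ} {x : ℕ} : x ∈ qcomp ν ↔ x ≠ 0 ∧ ∃ i, ν i = x := by
  simp [qcomp, and_comm]

theorem eq_of_support_eq_of_qcomp_eq {ν μ : Fin n →₀ ℕ} (hs : ν.support = μ.support)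
    (hq : qcomp ν = qcomp μ) : ν = μ := by
  rw [qcomp_eq_map_sort, qcomp_eq_map_sort, hs, List.map_inj_left] at hq
  ext i
  by_cases hi : i ∈ μ.support
  · exact hq i ((Finset.mem_sort _).2 hi)
  · rw [Finsupp.notMem_support_iff.1 hi, Finsupp.notMem_support_iff.1 (hs ▸ hi)]

end Compositions

section HivertAction

variable {n : ℕ}

theorem hivertExp_apply (σ : Equiv.Perm (Fin n)) (ν : Fin n →₀ ℕ) (j : Fin n) :
    hivertExp σ ν j = (qcomp ν).getD (((ν.support.image σ).sort (· ≤ ·)).idxOf j) 0 := by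
  rw [qcomp_eq_map_sort]
  rfl

theorem length_qcomp_eq_length_sort_image (σ : Equiv.Perm (Fin n)) (ν : Fin n →₀ ℕ) :
    (qcomp ν).length = ((ν.support.image σ).sort (· ≤ ·)).length := by
  rw [length_qcomp, Finset.length_sort, Finset.card_image_of_injective _ σ.injective]

theorem support_hivertExp (σ : Equiv.Perm (Fin n)) (ν : Fin n →₀ ℕ) :
    (hivertExp σ ν).support = ν.support.image σ := by
  ext j
  rw [Finsupp.mem_support_iff, hivertExp_apply,
    List.getD_idxOf_ne_iff (length_qcomp_eq_length_sort_image σ ν)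
      (fun h => (mem_qcomp.1 h).1 rfl), Finset.mem_sort]

theorem qcomp_hivertExp (σ : Equiv.Perm (Fin n)) (ν : Fin n →₀ ℕ) :
    qcomp (hivertExp σ ν) = qcomp ν := by
  rw [qcomp_eq_map_sort, support_hivertExp]
  refine (List.map_congr_left fun j _ => hivertExp_apply σ ν j).trans ?_
  exact List.map_getD_idxOf (Finset.sort_nodup _ _) (length_qcomp_eq_length_sort_image σ ν) 0

theorem hivertExp_eq_of_image_support_eq {σ : Equiv.Perm (Fin n)} {ν μ : Fin n →₀ ℕ}
    (hs : ν.support.image σ = μ.support) (hq : qcomp ν = qcomp μ) : hivertExp σ ν = μ :=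
  eq_of_support_eq_of_qcomp_eq (by rw [support_hivertExp, hs]) (by rw [qcomp_hivertExp, hq])

theorem hivertExp_one (ν : Fin n →₀ ℕ) : hivertExp 1 ν = ν :=
  hivertExp_eq_of_image_support_eq (by simp) rfl

theorem hivertExp_inv_hivertExp (σ : Equiv.Perm (Fin n)) (ν : Fin n →₀ ℕ) :
    hivertExp σ⁻¹ (hivertExp σ ν) = ν :=
  hivertExp_eq_of_image_support_eq
    (by rw [support_hivertExp, Finset.image_image]; simp) (qcomp_hivertExp σ ν)

theorem hivertExp_injective (σ : Equiv.Perm (Fin n)) : Function.Injective (hivertExp σ) :=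
  Function.LeftInverse.injective (hivertExp_inv_hivertExp σ)

theorem hivertExp_surjective (σ : Equiv.Perm (Fin n)) : Function.Surjective (hivertExp σ) :=
  fun μ => ⟨hivertExp σ⁻¹ μ, by simpa using hivertExp_inv_hivertExp σ⁻¹ μ⟩

theorem exists_hivertExp_eq {ν μ : Fin n →₀ ℕ} (hq : qcomp ν = qcomp μ) :
    ∃ σ : Equiv.Perm (Fin n), hivertExp σ ν = μ := by
  obtain ⟨σ, hσ⟩ := Finset.exists_perm_image_eq (s := ν.support) (t := μ.support)
    (by rw [← length_qcomp, ← length_qcomp, hq])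
  exact ⟨σ, hivertExp_eq_of_image_support_eq hσ hq⟩

open scoped Classical in
theorem coeff_qAct_hivertExp (m : ℕ) (σ : Equiv.Perm (Fin n)) (w : Fin n → ZMod m)
    (P : MvPolynomial (Fin n) ℂ) (ν : Fin n →₀ ℕ) :
    (qAct m σ w P).coeff (hivertExp σ ν) =
      (if ∀ i, m ∣ ν i then 1
        else ∏ i, Complex.exp (2 * Real.pi * I / m) ^ (w i).val) * P.coeff ν := by
  rw [qAct, MvPolynomial.sum_def, MvPolynomial.coeff_sum]
  simp only [coeff_monomial, (hivertExp_injective σ).eq_iff]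
  rw [Finset.sum_ite_eq']
  by_cases h : ν ∈ P.support
  · rw [if_pos h]
  · rw [if_neg h, MvPolynomial.notMem_support_iff.1 h, mul_zero]

end HivertAction

section Expansion

variable {n m : ℕ}

theorem forall_dvd_iff_forall_mem_qcomp (ν : Fin n →₀ ℕ) :
    (∀ i, m ∣ ν i) ↔ ∀ x ∈ qcomp ν, m ∣ x := by
  refine ⟨fun h x hx => ?_, fun h i => ?_⟩
  · obtain ⟨-, i, rfl⟩ := mem_qcomp.1 hx
    exact h i
  · by_cases h0 : ν i = 0
    · simp [h0]
    · exact h _ (mem_qcomp.2 ⟨h0, i, rfl⟩)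

theorem forall_dvd_iff_of_qcomp_eq {ν μ : Fin n →₀ ℕ} (hq : qcomp ν = qcomp μ) :
    (∀ i, m ∣ ν i) ↔ ∀ i, m ∣ μ i := by
  rw [forall_dvd_iff_forall_mem_qcomp, forall_dvd_iff_forall_mem_qcomp, hq]

theorem qcomp_smul (hm : m ≠ 0) (τ : Fin n →₀ ℕ) :
    qcomp (m • τ) = (qcomp τ).map (m * ·) := by
  rw [qcomp_eq_map_sort, qcomp_eq_map_sort, Finsupp.support_smul_eq hm, List.map_map]
  rfl

theorem isQuasiSym_expand_iff (hm : m ≠ 0) (Q : MvPolynomial (Fin n) ℂ) :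
    IsQuasiSym (expand m Q) ↔ IsQuasiSym Q := by
  refine ⟨fun h τ τ' hq => ?_, fun h ν μ hq => ?_⟩
  · simpa [coeff_expand_smul _ hm] using
      h (m • τ) (m • τ') (by rw [qcomp_smul hm, qcomp_smul hm, hq])
  · by_cases hd : ∀ i, m ∣ ν i
    · obtain ⟨τ, rfl⟩ := Finsupp.exists_eq_smul_of_forall_dvd hd
      obtain ⟨τ', rfl⟩ :=
        Finsupp.exists_eq_smul_of_forall_dvd ((forall_dvd_iff_of_qcomp_eq hq).1 hd)
      rw [coeff_expand_smul _ hm, coeff_expand_smul _ hm]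
      rw [qcomp_smul hm, qcomp_smul hm] at hq
      exact h τ τ' (List.map_injective_iff.2 (mul_right_injective₀ hm) hq)
    · obtain ⟨i, hi⟩ := not_forall.1 hd
      obtain ⟨j, hj⟩ := not_forall.1 (mt (forall_dvd_iff_of_qcomp_eq hq).2 hd)
      rw [coeff_expand_of_not_dvd Q hi, coeff_expand_of_not_dvd Q hj]

end Expansion

def IsQuasiInvariant {n : ℕ} (m : ℕ) (P : MvPolynomial (Fin n) ℂ) : Prop :=
  ∀ (σ : Equiv.Perm (Fin n)) (w : Fin n → ZMod m), qAct m σ w P = P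

section QuasiInvariance

variable {n m : ℕ}

theorem IsQuasiInvariant.isQuasiSym {P : MvPolynomial (Fin n) ℂ} (h : IsQuasiInvariant m P) :
    IsQuasiSym P := by
  intro ν μ hq
  obtain ⟨σ, rfl⟩ := exists_hivertExp_eq hq
  have hcoeff := coeff_qAct_hivertExp m σ 0 P ν
  simp only [Pi.zero_apply, ZMod.val_zero, pow_zero, Finset.prod_const_one, ite_self,
    one_mul, h σ 0] at hcoeff
  exact hcoeff.symm

theorem IsQuasiInvariant.forall_dvd {P : MvPolynomial (Fin n) ℂ} (hm : 0 < m)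
    (h : IsQuasiInvariant m P) : ∀ ν ∈ P.support, ∀ i, m ∣ ν i := by
  intro ν hν i
  by_contra hi
  have hm1 : 1 < m := lt_of_le_of_ne hm fun h => hi (h ▸ one_dvd _)
  have : Fact (1 < m) := ⟨hm1⟩
  set ζ := Complex.exp (2 * Real.pi * I / m)
  let w : Fin n → ZMod m := Pi.single i 1
  have hweight : ∏ j, ζ ^ (w j).val = ζ := by
    rw [Fintype.prod_eq_single i fun j hj => by simp [w, Pi.single_eq_of_ne hj]]
    simp [w, ZMod.val_one]
  have hcoeff := coeff_qAct_hivertExp m 1 w P ν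
  rw [hivertExp_one, h, if_neg fun hd => hi (hd i), hweight] at hcoeff
  have hζ : ζ = 1 := mul_right_cancel₀ (mem_support_iff.1 hν) (by rw [← hcoeff, one_mul])
  exact (Complex.isPrimitiveRoot_exp m hm.ne').ne_one hm1 hζ

theorem isQuasiInvariant_of_forall_dvd {P : MvPolynomial (Fin n) ℂ}
    (hd : ∀ ν ∈ P.support, ∀ i, m ∣ ν i) (hq : IsQuasiSym P) : IsQuasiInvariant m P := by
  intro σ w
  ext μ
  obtain ⟨ν, rfl⟩ := hivertExp_surjective σ μ
  rw [coeff_qAct_hivertExp, hq (hivertExp σ ν) ν (qcomp_hivertExp σ ν)]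
  by_cases hν : ν ∈ P.support
  · rw [if_pos (hd ν hν), one_mul]
  · rw [notMem_support_iff.1 hν, mul_zero]

theorem isQuasiInvariant_iff (hm : 0 < m) (P : MvPolynomial (Fin n) ℂ) :
    IsQuasiInvariant m P ↔ (∀ ν ∈ P.support, ∀ i, m ∣ ν i) ∧ IsQuasiSym P :=
  ⟨fun h => ⟨h.forall_dvd hm, h.isQuasiSym⟩, fun h => isQuasiInvariant_of_forall_dvd h.1 h.2⟩

end QuasiInvariance

theorem quasiInvariant_iff_general (n m : ℕ) (hm : 0 < m)
    (P : MvPolynomial (Fin n) ℂ) :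
    (∀ (σ : Equiv.Perm (Fin n)) (w : Fin n → ZMod m), qAct m σ w P = P) ↔
      ∃ Q : MvPolynomial (Fin n) ℂ, IsQuasiSym Q ∧
        P = MvPolynomial.bind₁ (fun i => (X i : MvPolynomial (Fin n) ℂ) ^ m) Q := by
  change IsQuasiInvariant m P ↔ ∃ Q, IsQuasiSym Q ∧ P = expand m Q
  rw [isQuasiInvariant_iff hm, ← exists_expand_eq_iff hm.ne']
  constructor
  · rintro ⟨⟨Q, rfl⟩, hP⟩
    exact ⟨Q, (isQuasiSym_expand_iff hm.ne' Q).1 hP, rfl⟩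
  · rintro ⟨Q, hQ, rfl⟩
    exact ⟨⟨Q, rfl⟩, (isQuasiSym_expand_iff hm.ne' Q).2 hQ⟩

/-- `P` is quasi-invariant for the quasi-symmetrizing action of `G_{n,m}`
iff `P(X) = Q(x₁^m,…,xₙ^m)` for some quasi-symmetric polynomial `Q`. -/
theorem quasiInvariant_iff (n m : ℕ) (hn : 0 < n) (hm : 0 < m)
    (P : MvPolynomial (Fin n) ℂ) :
    (∀ (σ : Equiv.Perm (Fin n)) (w : Fin n → ZMod m), qAct m σ w P = P) ↔
      ∃ Q : MvPolynomial (Fin n) ℂ, IsQuasiSym Q ∧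
        P = MvPolynomial.bind₁ (fun i => (X i : MvPolynomial (Fin n) ℂ) ^ m) Q :=
  quasiInvariant_iff_general n m hm P
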